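/- Let A be a real symmetric d×d matrix and b ∈ ℝ^d with |b| = 1. Define η = tr(A)/d and μ = A:(b⊗b) − η. Then |A|² ≥ d·η² + (d/(d−1))·μ² (for d ≥ 2). -/
import Mathlib


theorem stmt18 (d : ℕ) (hd : 2 ≤ d) (A : Matrix (Fin d) (Fin d) ℝ)
    (hA : A.IsSymm) (b : Fin d → ℝ) (hb : ∑ i, (b i) ^ 2 = 1) (η μ : ℝ)
    (hη : η = A.trace / (d : ℝ))
    (hμ : μ = (∑ i, ∑ j, A i j * b i * b j) - η) :
    (d : ℝ) * η ^ 2 + ((d : ℝ) / ((d : ℝ) - 1)) * μ ^ 2 ≤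
      ∑ i, ∑ j, (A i j) ^ 2 := by
  have hd2 : (2:ℝ) ≤ (d:ℝ) := by exact_mod_cast hd
  have hdne : (d:ℝ) ≠ 0 := by linarith
  have hdm : (d:ℝ) - 1 ≠ 0 := by linarith
  set c : ℝ := (d:ℝ) * μ / ((d:ℝ) - 1) with hc
  -- trace
  have htr : ∑ i, A i i = (d:ℝ) * η := by
    have h1 : A.trace = ∑ i, A i i := by simp [Matrix.trace, Matrix.diag]
    rw [hη, ← h1]
    field_simp
  -- quadratic form
  have hq : ∑ i, ∑ j, A i j * (b i * b j) = μ + η := by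
    rw [hμ]
    simp_rw [← mul_assoc]
    ring
  -- sum of (b i * b j)^2
  have hbb : ∑ i, ∑ j, (b i * b j)^2 = 1 := by
    have : ∑ i, ∑ j, (b i * b j)^2 = (∑ i, (b i)^2) * (∑ j, (b j)^2) := by
      rw [Finset.sum_mul_sum]
      apply Finset.sum_congr rfl
      intro i _
      apply Finset.sum_congr rfl
      intro j _
      ring
    rw [this, hb]; ring
  -- step 1 : sum without the deltas
  have hK1 : ∑ i, ∑ j, (A i j - c * (b i * b j))^2
      = (∑ i, ∑ j, (A i j)^2) - 2*c*(μ+η) + c^2 := by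
    have e : ∀ i j, (A i j - c * (b i * b j))^2
        = (A i j)^2 - (2*c) * (A i j * (b i * b j)) + c^2 * (b i * b j)^2 := by
      intro i j; ring
    simp only [e, Finset.sum_add_distrib, Finset.sum_sub_distrib, ← Finset.mul_sum]
    rw [hq, hbb]
    ring
  -- step 2 : inner sum with deltas
  have e2 : ∀ i, ∑ j, (A i j - η * (if i = j then (1:ℝ) else 0)
        - c * (b i * b j - (if i = j then (1:ℝ) else 0)/(d:ℝ)))^2
      = (∑ j, (A i j - c * (b i * b j))^2)
        + (2*(c/(d:ℝ) - η)*(A i i - c*(b i)^2) + (c/(d:ℝ) - η)^2) := by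
    intro i
    have e : ∀ j, (A i j - η * (if i = j then (1:ℝ) else 0)
        - c * (b i * b j - (if i = j then (1:ℝ) else 0)/(d:ℝ)))^2
        = (A i j - c * (b i * b j))^2
          + (if i = j then 2*(c/(d:ℝ) - η)*(A i j - c*(b i * b j)) + (c/(d:ℝ) - η)^2 else 0) := by
      intro j
      split_ifs with h <;> ring
    simp_rw [e, Finset.sum_add_distrib]
    rw [Finset.sum_ite_eq]
    simp only [Finset.mem_univ, if_true]
    ring
  -- total sum identity
  have h0 : 0 ≤ ∑ i, ∑ j, (A i j - η * (if i = j then (1:ℝ) else 0)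
      - c * (b i * b j - (if i = j then (1:ℝ) else 0)/(d:ℝ)))^2 :=
    Finset.sum_nonneg fun i _ => Finset.sum_nonneg fun j _ => sq_nonneg _
  have htot : ∑ i, ∑ j, (A i j - η * (if i = j then (1:ℝ) else 0)
      - c * (b i * b j - (if i = j then (1:ℝ) else 0)/(d:ℝ)))^2
      = (∑ i, ∑ j, (A i j)^2) - 2*c*(μ+η) + c^2
        + (2*(c/(d:ℝ) - η)*((d:ℝ)*η - c) + (d:ℝ)*(c/(d:ℝ) - η)^2) := by
    calc ∑ i, ∑ j, (A i j - η * (if i = j then (1:ℝ) else 0)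
        - c * (b i * b j - (if i = j then (1:ℝ) else 0)/(d:ℝ)))^2
        = ∑ i, ((∑ j, (A i j - c * (b i * b j))^2)
          + (2*(c/(d:ℝ) - η)*(A i i - c*(b i)^2) + (c/(d:ℝ) - η)^2)) := by
          exact Finset.sum_congr rfl fun i _ => e2 i
      _ = (∑ i, ∑ j, (A i j - c * (b i * b j))^2)
          + ((2*(c/(d:ℝ) - η)) * ∑ i, (A i i - c*(b i)^2) + (d:ℝ)*(c/(d:ℝ) - η)^2) := by
          rw [Finset.sum_add_distrib, Finset.sum_add_distrib, Finset.mul_sum]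
          simp [Finset.sum_const, Finset.card_univ]
          try ring
      _ = _ := by
          rw [hK1, Finset.sum_sub_distrib, ← Finset.mul_sum, htr, hb]
          ring
  rw [htot] at h0
  -- final algebra: with c = d μ / (d-1)
  have key : -2*c*(μ+η) + c^2 + (2*(c/(d:ℝ) - η)*((d:ℝ)*η - c) + (d:ℝ)*(c/(d:ℝ) - η)^2)
      = -((d:ℝ) * η ^ 2 + ((d:ℝ) / ((d:ℝ) - 1)) * μ ^ 2) := by
    rw [hc]
    field_simp
    ring
  nlinarith [h0, key]
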